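/- Let μ be an instance of REP over Σ with words u_start, u_end and rules w_i → w'_i for 1 ≤ i ≤ n, and let h be an overlapping solution of α_μ = β_μ with associated words v_1,…,v_n and suffixes y_1,…,y_n (where y_i is the suffix of h(x_i) of length |v_i| − |w_i|), and set v_{n+1} := y_n w'_n. Then for every 1 ≤ i ≤ n the word y_i w_i is a conjugate of v_i, and for every 1 ≤ i ≤ n+1 the word v_i contains exactly one occurrence of the letter #. -/

import Mathlib

/-!
Framework for REP (Rewriting with Programmed Rules) and the associated word
equations α_μ = β_μ.  Constants: `Option A` models Σ ∪ {#}, where `none` is the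
fresh letter `#` and `some a` embeds a ∈ Σ.  Variables are modelled by `ℕ`
(the variable x_i is `i`).
-/

namespace REP

/-- `u_end` is obtained from `u_start` by applying each of the `n` rules
`w i → w' i` (for `i = 1, …, n`) once, in order, each application replacing one
occurrence of `w i` by `w' i`. -/
def SatisfiesREP {A : Type} (n : ℕ) (ustart uend : List A) (w w' : ℕ → List A) : Prop :=
  ∃ u : ℕ → List A, u 0 = ustart ∧ u n = uend ∧
    ∀ i, 1 ≤ i → i ≤ n → ∃ s t : List A,
      u (i - 1) = s ++ w i ++ t ∧ u i = s ++ w' i ++ t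

/-- Apply a substitution (identity on constants) to a pattern. -/
def applySub {A : Type} (h : ℕ → List (Option A)) : List (Option A ⊕ ℕ) → List (Option A)
  | [] => []
  | Sum.inl a :: rest => a :: applySub h rest
  | Sum.inr x :: rest => h x ++ applySub h rest

/-- Embed a constant word over Σ into patterns over Σ ∪ {#}. -/
def lift {A : Type} (u : List A) : List (Option A ⊕ ℕ) := u.map (fun a => Sum.inl (some a))

/-- Embed a constant word over Σ into words over Σ ∪ {#}. -/
def liftW {A : Type} (u : List A) : List (Option A) := u.map some

/-- The fresh letter `#` as a pattern symbol. -/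
def hash {A : Type} : Option A ⊕ ℕ := Sum.inl none

/-- `x_1 w_1 x_2 w_2 ⋯ x_n w_n`. -/
def blocks {A : Type} (w : ℕ → List A) : ℕ → List (Option A ⊕ ℕ)
  | 0 => []
  | n + 1 => blocks w n ++ (Sum.inr (n + 1) :: lift (w (n + 1)))

/-- α_μ = `x_1 w_1 x_2 w_2 ⋯ x_n w_n x_{n+1} # u_end`. -/
def alphaMu {A : Type} (n : ℕ) (uend : List A) (w : ℕ → List A) : List (Option A ⊕ ℕ) :=
  blocks w n ++ [Sum.inr (n + 1), hash] ++ lift uend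

/-- β_μ = `# u_start x_1 w'_1 x_2 w'_2 ⋯ x_n w'_n x_{n+1}`. -/
def betaMu {A : Type} (n : ℕ) (ustart : List A) (w' : ℕ → List A) : List (Option A ⊕ ℕ) :=
  hash :: lift ustart ++ blocks w' n ++ [Sum.inr (n + 1)]

/-- `x_1 w_1 ⋯ x_i w_i`. -/
def alphaPrefix {A : Type} (w : ℕ → List A) (i : ℕ) : List (Option A ⊕ ℕ) := blocks w i

/-- `# u_start x_1 w'_1 ⋯ w'_{i-1} x_i`. -/
def betaPrefix {A : Type} (ustart : List A) (w' : ℕ → List A) (i : ℕ) :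
    List (Option A ⊕ ℕ) :=
  hash :: lift ustart ++ blocks w' (i - 1) ++ [Sum.inr i]

/-- `h` is a solution of the equation α = β. -/
def IsSolution {A : Type} (h : ℕ → List (Option A)) (α β : List (Option A ⊕ ℕ)) : Prop :=
  applySub h α = applySub h β

/-- `h` is an overlapping solution of α_μ = β_μ : it is a solution and, for every
`1 ≤ i ≤ n`, there is `z_i` such that `w_i z_i` is a suffix of `h(x_i)` and
`h(# u_start x_1 w'_1 ⋯ w'_{i-1} x_i) = h(x_1 w_1 ⋯ x_i w_i) z_i`. -/
def OverlappingSolution {A : Type} (n : ℕ) (ustart uend : List A) (w w' : ℕ → List A)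
    (h : ℕ → List (Option A)) : Prop :=
  IsSolution h (alphaMu n uend w) (betaMu n ustart w') ∧
  ∀ i, 1 ≤ i → i ≤ n → ∃ z : List (Option A),
    (liftW (w i) ++ z) <:+ h i ∧
    applySub h (betaPrefix ustart w' i) = applySub h (alphaPrefix w i) ++ z

/-- `n`-fold concatenation `u^n` of the word `u`. -/
def npow {A : Type} (u : List A) : ℕ → List A
  | 0 => []
  | n + 1 => u ++ npow u n

/-- `y_i`, the suffix of `h(x_i)` of length `|v_i| - |w_i|`. -/
def ySuf {A : Type} (h : ℕ → List (Option A)) (v : ℕ → List (Option A)) (w : ℕ → List A)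
    (i : ℕ) : List (Option A) :=
  (h i).drop ((h i).length - ((v i).length - (w i).length))

/-- Two words are conjugate if `u = st` and `v = ts` for some words `s`, `t`. -/
def Conj {B : Type} (u v : List B) : Prop := ∃ s t : List B, u = s ++ t ∧ v = t ++ s

/-- The words `v_1, …, v_n` associated with an overlapping solution `h`
(as guaranteed by the characterisation of overlapping solutions):
`v_i` is a prefix of `h(x_i)`, `|w_i| ≤ |v_i|`, `h(x_i) w_i` is a prefix of `v_i^ω`
(i.e. of `v_i^m` for all sufficiently large `m`), `v_1 = # u_start`,
`v_i = y_{i-1} w'_{i-1}` for `2 ≤ i ≤ n`, and `y_n w'_n h(x_{n+1}) = h(x_{n+1}) # u_end`. -/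
def AssocWords {A : Type} (n : ℕ) (ustart uend : List A) (w w' : ℕ → List A)
    (h : ℕ → List (Option A)) (v : ℕ → List (Option A)) : Prop :=
  (∀ i, 1 ≤ i → i ≤ n →
    v i <+: h i ∧ (w i).length ≤ (v i).length ∧
    ∃ N : ℕ, ∀ m : ℕ, N ≤ m → (h i ++ liftW (w i)) <+: npow (v i) m) ∧
  v 1 = none :: liftW ustart ∧
  (∀ i, 2 ≤ i → i ≤ n → v i = ySuf h v w (i - 1) ++ liftW (w' (i - 1))) ∧
  ySuf h v w n ++ liftW (w' n) ++ h (n + 1) = h (n + 1) ++ none :: liftW uend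

end REP

/-!
The hypothesis that `h(x_i) w_i` is a prefix of a power of `v_i` says that `h(x_i) w_i` is
`v_i^k p` for some factorisation `v_i = p q`; its suffix of length `|v_i|`, which is `y_i w_i`,
is therefore `q p`, a conjugate of `v_i`. Conjugate words have the same number of `#`s and the
`w_i`, `w'_i` contain none, so `v_{i+1} = y_i w'_i` has as many `#`s as `y_i w_i`, hence as `v_i`;
by induction from `v_1 = # u_start` each `v_i` has exactly one.
-/

namespace REP

section Words

variable {B : Type}

lemma npow_succ_right (v : List B) (m : ℕ) : npow v (m + 1) = npow v m ++ v := by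
  induction m with
  | zero => simp [npow]
  | succ m ih =>
    show v ++ npow v (m + 1) = (v ++ npow v m) ++ v
    rw [ih, List.append_assoc]

lemma exists_eq_npow_append_of_prefix_npow {u v : List B} {m : ℕ} (hu : u <+: npow v m) :
    ∃ k p q, v = p ++ q ∧ u = npow v k ++ p := by
  induction m generalizing u with
  | zero => exact ⟨0, [], v, rfl, List.prefix_nil.mp hu⟩
  | succ m ih =>
    rcases List.prefix_or_prefix_of_prefix hu (List.prefix_append v (npow v m)) with huv | hvu
    · obtain ⟨q, rfl⟩ := huv
      exact ⟨0, u, q, rfl, rfl⟩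
    · obtain ⟨u', rfl⟩ := hvu
      obtain ⟨k, p, q, hv, rfl⟩ := ih ((List.prefix_append_right_inj v).mp hu)
      exact ⟨k + 1, p, q, hv, by rw [npow, List.append_assoc]⟩

lemma conj_drop_of_prefix_npow {u v : List B} {m : ℕ} (hu : u <+: npow v m)
    (hlen : v.length ≤ u.length) : Conj (u.drop (u.length - v.length)) v := by
  obtain ⟨k, p, q, rfl, rfl⟩ := exists_eq_npow_append_of_prefix_npow hu
  suffices hsuf : (npow (p ++ q) k ++ p).drop ((npow (p ++ q) k ++ p).length - (p ++ q).length)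
      = q ++ p from hsuf ▸ ⟨q, p, rfl, rfl⟩
  cases k with
  | zero =>
    have hq : q = [] := by simpa [npow] using hlen
    subst hq
    simp [npow]
  | succ k =>
    have hsplit : npow (p ++ q) (k + 1) ++ p = (npow (p ++ q) k ++ p) ++ (q ++ p) := by
      simp only [npow_succ_right, List.append_assoc]
    rw [hsplit]
    exact List.drop_left' (by simp only [List.length_append]; omega)

lemma drop_length_sub_append {a b : List B} {k : ℕ} (hb : b.length ≤ k) :
    (a ++ b).drop ((a ++ b).length - k) = a.drop (a.length - (k - b.length)) ++ b := by
  rw [List.length_append, List.drop_append_of_le_length (by omega)]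
  congr 2
  omega

lemma Conj.count_eq [BEq B] {u v : List B} (huv : Conj u v) (b : B) : u.count b = v.count b := by
  obtain ⟨s, t, rfl, rfl⟩ := huv
  simp only [List.count_append, Nat.add_comm]

end Words

section AssocWords

variable {A : Type} {n : ℕ} {ustart uend : List A} {w w' : ℕ → List A}
  {h v : ℕ → List (Option A)}

lemma count_none_liftW [DecidableEq A] (u : List A) : (liftW u).count none = 0 :=
  List.count_eq_zero.mpr (by simp [liftW])

lemma AssocWords.conj_ySuf_append (hv : AssocWords n ustart uend w w' h v) {i : ℕ}
    (hi : 1 ≤ i) (hin : i ≤ n) : Conj (ySuf h v w i ++ liftW (w i)) (v i) := by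
  obtain ⟨hpre, hlen, N, hN⟩ := hv.1 i hi hin
  have hlift : (liftW (w i)).length = (w i).length := List.length_map _
  have hconj := conj_drop_of_prefix_npow (hN N le_rfl)
    (by simp only [List.length_append]; have := hpre.length_le; omega)
  rwa [drop_length_sub_append (by omega), hlift] at hconj

lemma AssocWords.count_none_ySuf_append [DecidableEq A]
    (hv : AssocWords n ustart uend w w' h v) {i : ℕ} (hi : 1 ≤ i) (hin : i ≤ n) (u : List A) :
    (ySuf h v w i ++ liftW u).count none = (v i).count none := by
  have hconj := (hv.conj_ySuf_append hi hin).count_eq none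
  rw [List.count_append, count_none_liftW, ← hconj, List.count_append, count_none_liftW]

lemma AssocWords.count_none_eq_one [DecidableEq A] (hv : AssocWords n ustart uend w w' h v) :
    ∀ i, 1 ≤ i → i ≤ n → (v i).count none = 1
  | 0, hi, _ => absurd hi (by decide)
  | 1, _, _ => by simp [hv.2.1, count_none_liftW]
  | i + 2, _, hin => by
    rw [hv.2.2.1 (i + 2) (by omega) hin, show i + 2 - 1 = i + 1 from rfl,
      hv.count_none_ySuf_append (by omega) (by omega),
      hv.count_none_eq_one (i + 1) (by omega) (by omega)]

end AssocWords

end REP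

open REP in
theorem stmt5_general (A : Type) [DecidableEq A] (n : ℕ) (hn : 1 ≤ n)
    (ustart uend : List A) (w w' : ℕ → List A)
    (h : ℕ → List (Option A)) (v : ℕ → List (Option A))
    (hv : AssocWords n ustart uend w w' h v) :
    (∀ i, 1 ≤ i → i ≤ n → Conj (ySuf h v w i ++ liftW (w i)) (v i)) ∧
    (∀ i, 1 ≤ i → i ≤ n + 1 →
      ((if i = n + 1 then ySuf h v w n ++ liftW (w' n) else v i).count
        (none : Option A)) = 1) := by
  refine ⟨fun i hi hin => hv.conj_ySuf_append hi hin, fun i hi hin => ?_⟩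
  split_ifs with hlast
  · rw [hv.count_none_ySuf_append hn le_rfl, hv.count_none_eq_one n hn le_rfl]
  · exact hv.count_none_eq_one i hi (by omega)

open REP in
theorem stmt5 (A : Type) [DecidableEq A] (n : ℕ) (hn : 1 ≤ n)
    (ustart uend : List A) (w w' : ℕ → List A)
    (h : ℕ → List (Option A)) (v : ℕ → List (Option A))
    (hover : OverlappingSolution n ustart uend w w' h)
    (hv : AssocWords n ustart uend w w' h v) :
    (∀ i, 1 ≤ i → i ≤ n → Conj (ySuf h v w i ++ liftW (w i)) (v i)) ∧
    (∀ i, 1 ≤ i → i ≤ n + 1 →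
      ((if i = n + 1 then ySuf h v w n ++ liftW (w' n) else v i).count
        (none : Option A)) = 1) :=
  stmt5_general A n hn ustart uend w w' h v hv
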